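/- arXiv:2505.03065 — 2 statements merged into one kernel-verified Lean document; each statement's English description precedes it below -/
import Mathlib

section
/- There exist invertible matrices A ∈ GL_n(k) and C ∈ GL_{n−1}(k) and a k-algebra automorphism σ of R induced by an invertible linear change of the variables x_1,…,x_d, such that the matrix φ' obtained by applying σ to every entry of A·φ·C has the form φ' = x_1·E_u + x_2·M_2 + … + x_d·M_d, where u is the least integer (1 ≤ u ≤ n−d) with ht I_{u+1}(φ) = d−1, E_u is the n×(n−1) matrix over k whose (i,i) entries equal 1 for 1 ≤ i ≤ u and whose other entries are 0, and M_2,…,M_d are n×(n−1) matrices over k. -/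
/-!
Write `φ = x₁ B₁ + ⋯ + x_d B_d` with scalar matrices `B_a`. Since `u` is least with
`ht I_{u+1}(φ) = d - 1`, and `ht I_1(φ) = d`, the ideals `I_u(φ)` and `I_{u+1}(φ)` have different
radicals; by the Nullstellensatz some point `p` kills all `(u+1)`-minors of `φ` but not all
`u`-minors, i.e. `φ(p) = ∑ p_a B_a` has rank exactly `u`. Scalar row and column operations bring
`φ(p)` to `E_u`, and a linear change of variables whose first column is `p` makes `φ(p)` the
coefficient of `x₁`.
-/

open MvPolynomial Matrix

/-- The ideal generated by all `j × j` minors of a matrix. -/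
noncomputable def minorsIdeal {A : Type*} [CommRing A] {p q : ℕ}
    (M : Matrix (Fin p) (Fin q) A) (j : ℕ) : Ideal A :=
  Ideal.span { x | ∃ (r : Fin j → Fin p) (c : Fin j → Fin q),
    Function.Injective r ∧ Function.Injective c ∧ x = (M.submatrix r c).det }

/-- The height of an ideal: the infimum of the heights of the primes containing it. -/
noncomputable def idealHeight {A : Type*} [CommRing A] (I : Ideal A) : ℕ∞ :=
  ⨅ (P : PrimeSpectrum A) (_ : I ≤ P.asIdeal), Order.height P

section minorsIdeal

variable {A B : Type*} [CommRing A] [CommRing B] {p q : ℕ}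

theorem det_submatrix_mem_minorsIdeal (M : Matrix (Fin p) (Fin q) A) {j : ℕ}
    {r : Fin j → Fin p} {c : Fin j → Fin q} (hr : r.Injective) (hc : c.Injective) :
    (M.submatrix r c).det ∈ minorsIdeal M j :=
  Ideal.subset_span ⟨r, c, hr, hc, rfl⟩

theorem minorsIdeal_succ_le (M : Matrix (Fin p) (Fin q) A) (j : ℕ) :
    minorsIdeal M (j + 1) ≤ minorsIdeal M j := by
  refine Ideal.span_le.2 ?_
  rintro _ ⟨r, c, hr, hc, rfl⟩
  rw [SetLike.mem_coe, det_succ_row_zero]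
  refine Ideal.sum_mem _ fun l _ => Ideal.mul_mem_left _ _ ?_
  rw [submatrix_submatrix]
  exact det_submatrix_mem_minorsIdeal M (hr.comp (Fin.succ_injective _))
    (hc.comp Fin.succAbove_right_injective)

theorem minorsIdeal_map (f : A →+* B) (M : Matrix (Fin p) (Fin q) A) (j : ℕ) :
    minorsIdeal (M.map f) j = (minorsIdeal M j).map f := by
  simp only [minorsIdeal, Ideal.map_span]
  congr 1
  ext x
  constructor
  · rintro ⟨r, c, hr, hc, rfl⟩
    exact ⟨_, ⟨r, c, hr, hc, rfl⟩, RingHom.map_det f _⟩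
  · rintro ⟨_, ⟨r, c, hr, hc, rfl⟩, rfl⟩
    exact ⟨r, c, hr, hc, RingHom.map_det f _⟩

theorem minorsIdeal_zero {j : ℕ} (hj : j ≠ 0) :
    minorsIdeal (0 : Matrix (Fin p) (Fin q) A) j = ⊥ := by
  refine Ideal.span_eq_bot.2 ?_
  rintro _ ⟨r, c, -, -, rfl⟩
  have : Nonempty (Fin j) := ⟨⟨0, Nat.pos_of_ne_zero hj⟩⟩
  simp

theorem exists_det_submatrix_ne_zero_of_minorsIdeal_ne_bot {M : Matrix (Fin p) (Fin q) A}
    {j : ℕ} (h : minorsIdeal M j ≠ ⊥) : ∃ (r : Fin j → Fin p) (c : Fin j → Fin q),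
      r.Injective ∧ c.Injective ∧ (M.submatrix r c).det ≠ 0 := by
  contrapose! h
  refine Ideal.span_eq_bot.2 ?_
  rintro _ ⟨r, c, hr, hc, rfl⟩
  exact h r c hr hc

theorem det_submatrix_eq_zero_of_minorsIdeal_eq_bot {ι : Type*} [Fintype ι] [DecidableEq ι]
    {M : Matrix (Fin p) (Fin q) A} (h : minorsIdeal M (Fintype.card ι) = ⊥)
    (r : ι → Fin p) (c : ι → Fin q) : (M.submatrix r c).det = 0 := by
  by_cases hr : r.Injective
  swap
  · obtain ⟨i, i', hii', hne⟩ := Function.not_injective_iff.1 hr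
    exact det_zero_of_row_eq hne (funext fun _ => by simp [hii'])
  by_cases hc : c.Injective
  swap
  · obtain ⟨i, i', hii', hne⟩ := Function.not_injective_iff.1 hc
    exact det_zero_of_column_eq hne fun _ => by simp [hii']
  let e := Fintype.equivFin ι
  rw [← det_submatrix_equiv_self e.symm, submatrix_submatrix, ← Ideal.mem_bot, ← h]
  exact det_submatrix_mem_minorsIdeal M (hr.comp e.symm.injective) (hc.comp e.symm.injective)

end minorsIdeal

theorem idealHeight_eq_of_radical_eq {A : Type*} [CommRing A] {I J : Ideal A}
    (h : I.radical = J.radical) : idealHeight I = idealHeight J := by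
  unfold idealHeight
  congr! 2 with P
  rw [← P.isPrime.radical_le_iff, h, P.isPrime.radical_le_iff]

theorem LinearIndependent.exists_linearEquiv_apply_eq {K V ι : Type*} [Field K]
    [AddCommGroup V] [Module K V] [Finite ι] {v w : ι → V} (hv : LinearIndependent K v)
    (hw : LinearIndependent K w) : ∃ g : V ≃ₗ[K] V, ∀ i, g (v i) = w i := by
  have : FiniteDimensional K (Submodule.span K (Set.range v)) :=
    FiniteDimensional.span_of_finite K (Set.finite_range v)
  obtain ⟨g, hg⟩ := Submodule.exists_linearEquiv_restrict_eq
    (hv.linearCombinationEquiv.symm ≪≫ₗ hw.linearCombinationEquiv)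
  refine ⟨g, fun i => ?_⟩
  have hvi : (hv.linearCombinationEquiv (Finsupp.single i 1) : V) = v i := by simp
  rw [← hvi, ← hg]
  simp

namespace Matrix

variable {k : Type*} [Field k]

theorem exists_isUnit_det_mul_eq {n ι : Type*} [Fintype n] [DecidableEq n] [Finite ι]
    {X Y : Matrix n ι k} (hX : LinearIndependent k X.col) (hY : LinearIndependent k Y.col) :
    ∃ A : Matrix n n k, IsUnit A.det ∧ A * X = Y := by
  obtain ⟨g, hg⟩ := hX.exists_linearEquiv_apply_eq hY
  refine ⟨LinearMap.toMatrix' g, by simpa using LinearEquiv.isUnit_det' g, ?_⟩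
  ext i a
  have := congrFun (LinearMap.toMatrix'_mulVec (g : (n → k) →ₗ[k] n → k) (X.col a)) i
  rw [LinearEquiv.coe_coe, hg a] at this
  simpa [mulVec, dotProduct, mul_apply] using this

theorem exists_isUnit_det_col_eq {n : Type*} [Fintype n] [DecidableEq n] {v : n → k}
    (hv : v ≠ 0) (j : n) : ∃ L : Matrix n n k, IsUnit L.det ∧ ∀ i, L i j = v i := by
  obtain ⟨g, hg⟩ := LinearIndependent.exists_linearEquiv_apply_eq (K := k) (ι := Unit)
    (v := fun _ => (Pi.single j 1 : n → k)) (w := fun _ => v)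
    (linearIndependent_unique_iff.2 (by simp)) (linearIndependent_unique_iff.2 hv)
  exact ⟨LinearMap.toMatrix' g, by simpa using LinearEquiv.isUnit_det' g,
    fun i => by simp [LinearMap.toMatrix'_apply, hg ()]⟩

theorem linearIndependent_col_of_isUnit_submatrix {R m ι : Type*} [CommSemiring R] [Fintype ι]
    [DecidableEq ι] {X : Matrix m ι R} {r : ι → m} (h : IsUnit (X.submatrix r id)) :
    LinearIndependent R X.col :=
  LinearIndependent.of_comp (LinearMap.funLeft R R r) (linearIndependent_cols_of_isUnit h)

/-- The matrix `E_u` of the statement. -/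
def rankNormalForm (R : Type*) [Zero R] [One R] (p q u : ℕ) : Matrix (Fin p) (Fin q) R :=
  of fun i j => if (i : ℕ) = j ∧ (i : ℕ) < u then 1 else 0

theorem rankNormalForm_mul_transpose {R : Type*} [CommSemiring R] (p q u : ℕ) :
    rankNormalForm R p u u * (rankNormalForm R q u u)ᵀ = rankNormalForm R p q u := by
  ext i j
  simp only [rankNormalForm, mul_apply, transpose_apply, of_apply]
  by_cases hi : (i : ℕ) < u
  · rw [Finset.sum_eq_single ⟨i, hi⟩ (fun a _ ha => by grind) (by simp)]
    grind
  · exact (Finset.sum_eq_zero fun a _ => by grind).trans (by grind)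

theorem linearIndependent_col_rankNormalForm {R : Type*} [Semiring R] {p u : ℕ} (h : u ≤ p) :
    LinearIndependent R (rankNormalForm R p u u).col := by
  convert (Pi.basisFun R (Fin p)).linearIndependent.comp _ (Fin.castLE_injective h) using 1
  ext a i
  simp only [rankNormalForm, col_apply, of_apply, Function.comp_apply, Pi.basisFun_apply,
    Pi.single_apply, Fin.ext_iff, Fin.val_castLE]
  grind

/-- The bordered `(u+1)`-minors vanish, and their Schur complements with respect to the
invertible block `T = ψ[r, c]` are the entries of `ψ - ψ[·, c] T⁻¹ ψ[r, ·]`. -/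
theorem eq_mul_inv_mul_of_minorsIdeal_eq_bot {R : Type*} [CommRing R] {n m u : ℕ}
    {ψ : Matrix (Fin n) (Fin m) R}
    {r : Fin u → Fin n} {c : Fin u → Fin m} (hT : IsUnit (ψ.submatrix r c).det)
    (h : minorsIdeal ψ (u + 1) = ⊥) :
    ψ = ψ.submatrix id c * ((ψ.submatrix r c)⁻¹ * ψ.submatrix r id) := by
  ext i j
  have : Invertible (ψ.submatrix r c) := invertibleOfIsUnitDet _ hT
  let B : Matrix (Fin u ⊕ Unit) (Fin u ⊕ Unit) R :=
    ψ.submatrix (Sum.elim r fun _ => i) (Sum.elim c fun _ => j)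
  have hB : B.det = 0 := det_submatrix_eq_zero_of_minorsIdeal_eq_bot (by simpa using h) _ _
  have h11 : B.toBlocks₁₁ = ψ.submatrix r c := rfl
  rw [← fromBlocks_toBlocks B, h11, det_fromBlocks₁₁] at hB
  have := hT.mul_right_eq_zero.1 hB
  rw [det_unique, sub_apply, sub_eq_zero] at this
  rw [← Matrix.mul_assoc]
  simpa [B, toBlocks₁₁, toBlocks₁₂, toBlocks₂₁, toBlocks₂₂, mul_apply, invOf_eq_nonsing_inv]
    using this

theorem exists_isUnit_det_mul_mul_eq_rankNormalForm {n m u : ℕ}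
    {ψ : Matrix (Fin n) (Fin m) k} (hu : minorsIdeal ψ (u + 1) = ⊥) (hu' : minorsIdeal ψ u ≠ ⊥) :
    ∃ (A : Matrix (Fin n) (Fin n) k) (C : Matrix (Fin m) (Fin m) k),
      IsUnit A.det ∧ IsUnit C.det ∧ A * ψ * C = rankNormalForm k n m u := by
  obtain ⟨r, c, hr, hc, hT⟩ := exists_det_submatrix_ne_zero_of_minorsIdeal_ne_bot hu'
  set T := ψ.submatrix r c
  have hT : IsUnit T.det := isUnit_iff_ne_zero.2 hT
  set X := ψ.submatrix id c
  set Y := T⁻¹ * ψ.submatrix r id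
  have hψ : ψ = X * Y := eq_mul_inv_mul_of_minorsIdeal_eq_bot hT hu
  have hX : IsUnit (X.submatrix r id) := (isUnit_iff_isUnit_det _).2 hT
  have hY : IsUnit (Yᵀ.submatrix c id) := by
    rw [← transpose_submatrix, submatrix_mul _ _ _ id _ Function.bijective_id, submatrix_id_id]
    change IsUnit (T⁻¹ * T)ᵀ
    rw [nonsing_inv_mul _ hT, transpose_one]
    exact isUnit_one
  obtain ⟨A, hA, hAX⟩ := exists_isUnit_det_mul_eq (linearIndependent_col_of_isUnit_submatrix hX)
    (linearIndependent_col_rankNormalForm (Fin.le_of_injective r hr))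
  obtain ⟨D, hD, hDY⟩ := exists_isUnit_det_mul_eq (linearIndependent_col_of_isUnit_submatrix hY)
    (linearIndependent_col_rankNormalForm (Fin.le_of_injective c hc))
  refine ⟨A, Dᵀ, hA, by rwa [det_transpose], ?_⟩
  rw [← rankNormalForm_mul_transpose, ← hAX, ← hDY, transpose_mul, transpose_transpose, hψ]
  simp only [Matrix.mul_assoc]

end Matrix

namespace MvPolynomial

section Pencil

variable {σ k ι κ : Type*} [CommSemiring k] [Fintype σ]

noncomputable def pencil (M : σ → Matrix ι κ k) : Matrix ι κ (MvPolynomial σ k) :=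
  ∑ a, (X a : MvPolynomial σ k) • (M a).map (C : k →+* MvPolynomial σ k)

theorem pencil_apply (M : σ → Matrix ι κ k) (i : ι) (j : κ) :
    pencil M i j = ∑ a, C (M a i j) * X a := by
  simp [pencil, Matrix.sum_apply, mul_comm]

theorem exists_eq_pencil {φ : Matrix ι κ (MvPolynomial σ k)}
    (h : ∀ i j, (φ i j).IsHomogeneous 1) : ∃ M : σ → Matrix ι κ k, φ = pencil M := by
  have h' (i j) : ∃ c : σ → k, ∑ a, c a • X a = φ i j := by
    rw [← Submodule.mem_span_range_iff_exists_fun, ← homogeneousSubmodule_one_eq_span_X]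
    exact h i j
  choose c hc using h'
  refine ⟨fun a => of fun i j => c i j a, ?_⟩
  ext i j : 1
  simp [pencil_apply, ← hc, smul_eq_C_mul]

theorem pencil_map_eval (M : σ → Matrix ι κ k) (x : σ → k) :
    (pencil M).map (eval x) = ∑ a, x a • M a := by
  ext i j : 1
  simp [pencil_apply, Matrix.sum_apply, mul_comm]

theorem map_mul_pencil_mul {ι' κ' : Type*} [Fintype ι] [Fintype κ] (A : Matrix ι' ι k)
    (M : σ → Matrix ι κ k) (B : Matrix κ κ' k) :
    A.map (algebraMap k (MvPolynomial σ k)) * pencil M * B.map (algebraMap k (MvPolynomial σ k)) =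
      pencil fun a => A * M a * B := by
  simp [pencil, Matrix.mul_sum, Matrix.sum_mul, algebraMap_eq, Matrix.map_mul]

theorem pencil_map_aeval (M : σ → Matrix ι κ k) (L : Matrix σ σ k) :
    (pencil M).map (aeval fun a => ∑ b, L a b • X b) = pencil fun b => ∑ a, L a b • M a := by
  ext i j : 1
  simp only [map_apply, pencil_apply, map_sum, map_mul, aeval_C, aeval_X, algebraMap_eq,
    Matrix.sum_apply, Matrix.smul_apply, smul_eq_mul, smul_eq_C_mul, Finset.mul_sum,
    Finset.sum_mul]
  rw [Finset.sum_comm]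
  exact Finset.sum_congr rfl fun _ _ => Finset.sum_congr rfl fun _ _ => by ring

end Pencil

section Translate

variable {σ k : Type*} [CommRing k]

noncomputable def translate (c : σ → k) : MvPolynomial σ k ≃ₐ[k] MvPolynomial σ k :=
  AlgEquiv.ofAlgHom (aeval fun i => X i + C (c i)) (aeval fun i => X i - C (c i))
    (algHom_ext fun i => by simp) (algHom_ext fun i => by simp)

theorem aeval_translate (c x : σ → k) (f : MvPolynomial σ k) :
    aeval x (translate c f) = aeval (x + c) f := by
  change (aeval x).comp (aeval fun i => X i + C (c i)) f = _
  rw [comp_aeval]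
  congr 1
  ext i
  simp

end Translate

variable {σ k : Type*} [Field k]

theorem comap_translate_vanishingIdeal_singleton (c x : σ → k) :
    (vanishingIdeal k {x}).comap (translate c) = vanishingIdeal k {x + c} := by
  ext f
  simp [aeval_translate]

theorem mem_zeroLocus_minorsIdeal_iff {n m : ℕ} {φ : Matrix (Fin n) (Fin m) (MvPolynomial σ k)}
    {j : ℕ} {x : σ → k} :
    x ∈ zeroLocus k (minorsIdeal φ j) ↔ minorsIdeal (φ.map (eval x)) j = ⊥ := by
  rw [minorsIdeal_map, Ideal.map_eq_bot_iff_le_ker, mem_zeroLocus_iff]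
  simp [SetLike.le_def]

variable [IsAlgClosed k] [Finite σ]

/-- All maximal ideals of `k[σ]` are translates of each other, and one of them has height
`dim k[σ] = |σ|`. -/
theorem height_vanishingIdeal_singleton (x : σ → k) :
    (vanishingIdeal k {x}).height = Nat.card σ := by
  have hdim : ringKrullDim (MvPolynomial σ k) = Nat.card σ := by
    simp [ringKrullDim_eq_zero_of_field]
  have : FiniteRingKrullDim (MvPolynomial σ k) :=
    finiteRingKrullDim_iff_ne_bot_and_top.2
      ⟨by simp [hdim], by rw [hdim]; exact WithBot.coe_injective.ne (ENat.natCast_ne_top _)⟩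
  obtain ⟨M, hM, hMh⟩ := Ideal.exists_isMaximal_height (R := MvPolynomial σ k)
  obtain ⟨y, rfl⟩ := eq_vanishingIdeal_singleton_of_isMaximal k hM
  rw [hdim, ← add_sub_cancel x y, ← comap_translate_vanishingIdeal_singleton] at hMh
  rw [← (translate (y - x)).toRingEquiv.height_comap]
  exact_mod_cast hMh

theorem natCard_le_idealHeight_of_zeroLocus_subset {J : Ideal (MvPolynomial σ k)} {x : σ → k}
    (h : zeroLocus k J ⊆ {x}) : (Nat.card σ : ℕ∞) ≤ idealHeight J := by
  refine le_iInf₂ fun P hJP => ?_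
  have hP : vanishingIdeal k {x} ≤ P.asIdeal := calc
    _ ≤ vanishingIdeal k (zeroLocus k J) := vanishingIdeal_anti_mono h
    _ = J.radical := vanishingIdeal_zeroLocus_eq_radical J
    _ ≤ P.asIdeal := P.isPrime.radical_le_iff.2 hJP
  rw [← PrimeSpectrum.height_eq_orderHeight, ← height_vanishingIdeal_singleton x]
  exact Ideal.height_mono hP

end MvPolynomial

/-- If the two zero loci agreed, `I_u(φ)` and `I_{u+1}(φ)` would have the same radical and hence
the same height `h`, contradicting the minimality of `u` if `u ≥ 2`, and `ht I_1(φ) = d` if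
`u = 1`. -/
theorem exists_mem_zeroLocus_minorsIdeal_succ_notMem {k : Type*} [Field k] [IsAlgClosed k]
    {d n m : ℕ} {φ : Matrix (Fin n) (Fin m) (MvPolynomial (Fin d) k)}
    (hI1 : minorsIdeal φ 1 = Ideal.span (Set.range X)) {u : ℕ} (hu1 : 1 ≤ u) {h : ℕ∞}
    (hh : h < d) (hu : idealHeight (minorsIdeal φ (u + 1)) = h)
    (huleast : ∀ v : ℕ, 1 ≤ v → idealHeight (minorsIdeal φ (v + 1)) = h → u ≤ v) :
    ∃ x ∈ zeroLocus k (minorsIdeal φ (u + 1)), x ∉ zeroLocus k (minorsIdeal φ u) := by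
  by_contra! hV
  have hZ : zeroLocus k (minorsIdeal φ u) = zeroLocus k (minorsIdeal φ (u + 1)) :=
    (zeroLocus_anti_mono (minorsIdeal_succ_le φ u)).antisymm hV
  have hht : idealHeight (minorsIdeal φ u) = h := by
    rw [← hu]
    apply idealHeight_eq_of_radical_eq
    rw [← vanishingIdeal_zeroLocus_eq_radical (K := k), hZ, vanishingIdeal_zeroLocus_eq_radical]
  obtain rfl | hu1 := hu1.eq_or_lt
  · have h0 : zeroLocus k (minorsIdeal φ 1) ⊆ {0} := by
      intro x hx
      rw [hI1, mem_zeroLocus_iff] at hx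
      funext a
      simpa using hx (X a) (Ideal.subset_span ⟨a, rfl⟩)
    have := natCard_le_idealHeight_of_zeroLocus_subset h0
    rw [Nat.card_fin, hht] at this
    exact this.not_gt hh
  · have := huleast (u - 1) (by omega) (by rwa [Nat.sub_add_cancel hu1.le])
    omega

theorem stmt_12
    (k : Type*) [Field k] [IsAlgClosed k] (d m : ℕ)
    (hd : 3 ≤ d)
    (φ : Matrix (Fin (m + 1)) (Fin m) (MvPolynomial (Fin d) k))
    (hφlin : ∀ i j, (φ i j).IsHomogeneous 1)
    (hI1 : minorsIdeal φ 1 = Ideal.span (Set.range MvPolynomial.X))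
    (u : ℕ) (hu1 : 1 ≤ u)
    (hu : idealHeight (minorsIdeal φ (u + 1)) = ((d - 1 : ℕ) : ℕ∞))
    (huleast : ∀ v : ℕ, 1 ≤ v →
      idealHeight (minorsIdeal φ (v + 1)) = ((d - 1 : ℕ) : ℕ∞) → u ≤ v)
    :
    ∃ (A : Matrix (Fin (m + 1)) (Fin (m + 1)) k) (C : Matrix (Fin m) (Fin m) k)
      (L : Matrix (Fin d) (Fin d) k),
      IsUnit A.det ∧ IsUnit C.det ∧ IsUnit L.det ∧
      ∃ M : Fin d → Matrix (Fin (m + 1)) (Fin m) k,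
        (∀ i j, M ⟨0, by omega⟩ i j = if (i : ℕ) = (j : ℕ) ∧ (i : ℕ) < u then 1 else 0) ∧
        ∀ i j, MvPolynomial.aeval (fun a : Fin d => ∑ b : Fin d, L a b • MvPolynomial.X b)
            (((A.map (algebraMap k (MvPolynomial (Fin d) k))) * φ *
              (C.map (algebraMap k (MvPolynomial (Fin d) k)))) i j)
          = ∑ a : Fin d, MvPolynomial.C (M a i j) * MvPolynomial.X a := by
  obtain ⟨B, rfl⟩ := exists_eq_pencil hφlin
  obtain ⟨p, hp, hp'⟩ := exists_mem_zeroLocus_minorsIdeal_succ_notMem hI1 hu1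
    (by exact_mod_cast (by omega : d - 1 < d)) hu huleast
  rw [mem_zeroLocus_minorsIdeal_iff, pencil_map_eval] at hp hp'
  obtain ⟨A, C, hA, hC, hAC⟩ := exists_isUnit_det_mul_mul_eq_rankNormalForm hp hp'
  have hp0 : p ≠ 0 := by
    rintro rfl
    simp [minorsIdeal_zero (by omega : u ≠ 0)] at hp'
  obtain ⟨L, hL, hLp⟩ := exists_isUnit_det_col_eq hp0 ⟨0, by omega⟩
  refine ⟨A, C, L, hA, hC, hL, fun b => ∑ a, L a b • (A * B a * C), fun i j => ?_, fun i j => ?_⟩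
  · have hM0 : ∑ a, p a • (A * B a * C) = A * (∑ a, p a • B a) * C := by
      simp [Matrix.mul_sum, Matrix.sum_mul]
    simp only [hLp, hM0, hAC]
    rfl
  · rw [← Matrix.map_apply (f := aeval _), map_mul_pencil_mul, pencil_map_aeval, pencil_apply]
end

section
/- One has I_d(B) ⊆ Q and I_{d−1}(B') ⊆ Q: every d×d minor of B and every (d−1)×(d−1) minor of B' belongs to the defining ideal Q of the special fiber. -/
open MvPolynomial Matrix

/-!
The vector of signed maximal minors `g` is a left syzygy of `φ`. Substituting `t ↦ g` in the
defining identity `t ⬝ φ = x ⬝ B` therefore gives `x ⬝ B(g) = 0`, so the rows of `B(g)` are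
linearly dependent over the domain `k[x]` and every `d × d` minor of `B` lies in `Q`. In the
columns `u + 1, …, n − 1` the first row of `B` vanishes, so the same relation, with `x₁` dropped,
kills every maximal minor of `B'`.
-/

section minorsIdeal

variable {R S : Type*} [CommRing R] [CommRing S]

theorem map_minorsIdeal {p q : ℕ} (f : R →+* S) (A : Matrix (Fin p) (Fin q) R) (j : ℕ) :
    (minorsIdeal A j).map f = minorsIdeal (A.map f) j := by
  rw [minorsIdeal, minorsIdeal, Ideal.map_span]
  congr 1
  ext x
  constructor
  · rintro ⟨_, ⟨r, c, hr, hc, rfl⟩, rfl⟩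
    exact ⟨r, c, hr, hc, by rw [RingHom.map_det, RingHom.mapMatrix_apply, submatrix_map]⟩
  · rintro ⟨r, c, hr, hc, rfl⟩
    exact ⟨_, ⟨r, c, hr, hc, rfl⟩, by rw [RingHom.map_det, RingHom.mapMatrix_apply, submatrix_map]⟩

theorem minorsIdeal_eq_bot_of_vecMul_eq_zero [IsDomain R] {p q : ℕ}
    (A : Matrix (Fin p) (Fin q) R) {v : Fin p → R} (hv : v ≠ 0) (hvA : v ᵥ* A = 0) :
    minorsIdeal A p = ⊥ := by
  classical
  refine Submodule.span_eq_bot.mpr ?_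
  rintro _ ⟨r, c, hr, -, rfl⟩
  have hrbij : r.Bijective := Finite.injective_iff_bijective.mp hr
  refine exists_vecMul_eq_zero_iff.mp ⟨v ∘ r, fun h => hv ?_, funext fun j => ?_⟩
  · funext i
    obtain ⟨i', rfl⟩ := hrbij.surjective i
    exact congrFun h i'
  · simpa [vecMul, dotProduct] using
      (hrbij.sum_comp fun i => v i * A i (c j)).trans (congrFun hvA (c j))

theorem minorsIdeal_le_ker_of_vecMul_map_eq_zero [IsDomain S] {p q : ℕ} (f : R →+* S)
    (A : Matrix (Fin p) (Fin q) R) {v : Fin p → S} (hv : v ≠ 0) (hvA : v ᵥ* A.map f = 0) :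
    minorsIdeal A p ≤ RingHom.ker f := by
  rw [← Ideal.map_eq_bot_iff_le_ker, map_minorsIdeal]
  exact minorsIdeal_eq_bot_of_vecMul_eq_zero _ hv hvA

end minorsIdeal

theorem Matrix.vecMul_signed_det_submatrix_succAbove_eq_zero {R : Type*} [CommRing R] {m : ℕ}
    (φ : Matrix (Fin (m + 1)) (Fin m) R) :
    (fun i : Fin (m + 1) => (-1) ^ (i : ℕ) * (φ.submatrix i.succAbove id).det) ᵥ* φ = 0 := by
  funext j
  -- Laplace expansion along the first column of `φ` with its column `j` repeated in front.
  let N : Matrix (Fin (m + 1)) (Fin (m + 1)) R := fun i => Fin.cons (φ i j) (φ i)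
  have hN : N.det = 0 :=
    det_zero_of_column_eq (Fin.succ_ne_zero j).symm fun i => rfl
  rw [det_succ_column_zero] at hN
  rw [Pi.zero_apply, ← hN]
  simp only [vecMul, dotProduct]
  exact Finset.sum_congr rfl fun i _ => mul_right_comm ((-1 : R) ^ (i : ℕ)) _ _

theorem Matrix.vecMul_submatrix_succ_eq_zero {R : Type*} [CommRing R] {p : ℕ} {ι κ : Type*}
    [Fintype ι] {A : Matrix (Fin (p + 1)) ι R} {v : Fin (p + 1) → R} (hvA : v ᵥ* A = 0)
    (c : κ → ι) (hc : ∀ j, A 0 (c j) = 0) :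
    (v ∘ Fin.succ) ᵥ* A.submatrix Fin.succ c = 0 := by
  funext j
  have h := congrFun hvA (c j)
  simp only [vecMul, dotProduct, Fin.sum_univ_succ, hc, mul_zero, zero_add] at h
  exact h

theorem vecMul_X_map_aeval_eq_zero {k : Type*} [CommRing k] {σ τ ι : Type*} [Fintype σ]
    [Fintype τ] (φ : Matrix τ ι (MvPolynomial σ k)) (B : Matrix σ ι (MvPolynomial τ k))
    (hB : ∀ j, ∑ i, (X (Sum.inr i) : MvPolynomial (σ ⊕ τ) k) * aeval (X ∘ Sum.inl) (φ i j)
      = ∑ a, X (Sum.inl a) * aeval (X ∘ Sum.inr) (B a j))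
    {g : τ → MvPolynomial σ k} (hg : g ᵥ* φ = 0) :
    (X : σ → MvPolynomial σ k) ᵥ* B.map (aeval g) = 0 := by
  funext j
  have h := congrArg (aeval (Sum.elim X g)) (hB j)
  simp only [map_sum, _root_.map_mul, comp_aeval_apply, aeval_X, Function.comp_apply,
    Sum.elim_inl, Sum.elim_inr, aeval_X_left_apply] at h
  simpa [vecMul, dotProduct, h] using congrFun hg j

theorem stmt_17
    (k : Type*) [Field k] (d m : ℕ)
    (hd : 3 ≤ d)
    (φ : Matrix (Fin (m + 1)) (Fin m) (MvPolynomial (Fin d) k))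
    (g : Fin (m + 1) → MvPolynomial (Fin d) k)
    (hg : ∀ i, g i = (-1) ^ (i : ℕ) * (φ.submatrix i.succAbove id).det)
    (u : ℕ)
    (B : Matrix (Fin d) (Fin m) (MvPolynomial (Fin (m + 1)) k))
    (hB : ∀ j : Fin m,
      ∑ i : Fin (m + 1), (MvPolynomial.X (Sum.inr i) : MvPolynomial (Fin d ⊕ Fin (m + 1)) k) *
          MvPolynomial.aeval (fun a => MvPolynomial.X (Sum.inl a)) (φ i j)
        = ∑ a : Fin d, MvPolynomial.X (Sum.inl a) *
          MvPolynomial.aeval (fun i => MvPolynomial.X (Sum.inr i)) (B a j))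
    (hB0 : ∀ j : Fin m, B ⟨0, by omega⟩ j =
      if (j : ℕ) < u then MvPolynomial.X (Fin.castSucc j) else 0)
    (B' : Matrix (Fin (d - 1)) (Fin (m - u)) (MvPolynomial (Fin (m + 1)) k))
    (hB' : ∀ (a : Fin (d - 1)) (j : Fin (m - u)),
      B' a j = B ⟨(a : ℕ) + 1, by omega⟩ ⟨u + (j : ℕ), by omega⟩)
    (Q : Ideal (MvPolynomial (Fin (m + 1)) k))
    (hQ : Q = RingHom.ker (MvPolynomial.aeval g :
      MvPolynomial (Fin (m + 1)) k →ₐ[k] MvPolynomial (Fin d) k))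
    :
    minorsIdeal B d ≤ Q ∧ minorsIdeal B' (d - 1) ≤ Q := by
  obtain ⟨d, rfl⟩ : ∃ d', d = d' + 2 := ⟨d - 2, by omega⟩
  subst hQ
  have hgφ : g ᵥ* φ = 0 := by
    rw [funext hg]
    exact vecMul_signed_det_submatrix_succAbove_eq_zero φ
  have hBg : X ᵥ* B.map (aeval g) = 0 := vecMul_X_map_aeval_eq_zero φ B hB hgφ
  have hB'eq : B' = B.submatrix Fin.succ fun j : Fin (m - u) => (⟨u + j, by omega⟩ : Fin m) := by
    funext a j
    exact hB' a j
  have hBg' : (X ∘ Fin.succ) ᵥ* B'.map (aeval g) = 0 := by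
    rw [hB'eq, ← submatrix_map]
    refine vecMul_submatrix_succ_eq_zero hBg _ fun j => ?_
    rw [map_apply, show (0 : Fin (d + 2)) = ⟨0, by omega⟩ from rfl, hB0, if_neg (by simp),
      map_zero]
  exact ⟨minorsIdeal_le_ker_of_vecMul_map_eq_zero _ B (X_ne_zero 0 <| congrFun · 0) hBg,
    minorsIdeal_le_ker_of_vecMul_map_eq_zero _ B' (X_ne_zero _ <| congrFun · ⟨0, by omega⟩) hBg'⟩
end
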